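/- arXiv:2008.07248 — 2 statements merged into one kernel-verified Lean document; each statement's English description precedes it below -/
import Mathlib

section
/- Let K ⊊ C be a C-asymptotic set, let r := dist(o, K), let w be a unit vector with −w ∈ int C°, and let ω be a nonempty compact subset of Ω_C. Then every x ∈ τ(K,ω) satisfies ⟨w,x⟩ ≤ r / sin Δ(ω). -/
open scoped RealInnerProductSpace ENNReal NNReal
open MeasureTheory Metric Set

noncomputable section

variable {d : ℕ}

/-- `C` is a pointed closed convex cone with apex at the origin and nonempty interior. -/
def IsPCCCone (C : Set (EuclideanSpace ℝ (Fin d))) : Prop :=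
  IsClosed C ∧ Convex ℝ C ∧ (∀ x ∈ C, ∀ t : ℝ, 0 ≤ t → t • x ∈ C) ∧
    (∀ x ∈ C, -x ∈ C → x = 0) ∧ (interior C).Nonempty

/-- The polar cone `C°`. -/
def polarCone (C : Set (EuclideanSpace ℝ (Fin d))) : Set (EuclideanSpace ℝ (Fin d)) :=
  {x | ∀ y ∈ C, ⟪x, y⟫ ≤ 0}

/-- `Ω_C = S^{d-1} ∩ int C°`. -/
def omegaC (C : Set (EuclideanSpace ℝ (Fin d))) : Set (EuclideanSpace ℝ (Fin d)) :=
  Metric.sphere 0 1 ∩ interior (polarCone C)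

/-- The reverse spherical image `τ(K, ω)`: the set of boundary points of `K` at which some
outer normal vector belongs to `ω`. -/
def revSphImage (K ω : Set (EuclideanSpace ℝ (Fin d))) : Set (EuclideanSpace ℝ (Fin d)) :=
  {x ∈ frontier K | ∃ u ∈ ω, ∀ y ∈ K, ⟪u, y⟫ ≤ ⟪u, x⟫}

/-- The surface area measure `S_{d-1}(K, ω) = H^{d-1}(τ(K,ω))`. -/
def surfMeas (K ω : Set (EuclideanSpace ℝ (Fin d))) : ℝ≥0∞ :=
  μH[(d : ℝ) - 1] (revSphImage K ω)

/-- `K` is a `C`-asymptotic set. -/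
def CAsymptotic (C K : Set (EuclideanSpace ℝ (Fin d))) : Prop :=
  K.Nonempty ∧ IsClosed K ∧ Convex ℝ K ∧ K ⊆ C ∧
    ∀ ε > 0, ∃ R : ℝ, ∀ x ∈ frontier C, R ≤ ‖x‖ → Metric.infDist x K < ε

/-- `K` is a `C`-close set. -/
def CClose (C K : Set (EuclideanSpace ℝ (Fin d))) : Prop :=
  K.Nonempty ∧ IsClosed K ∧ Convex ℝ K ∧ K ⊆ C ∧ volume (C \ K) < ⊤

/-- `K` is a `C`-full set. -/
def CFull (C K : Set (EuclideanSpace ℝ (Fin d))) : Prop :=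
  K.Nonempty ∧ IsClosed K ∧ Convex ℝ K ∧ K ⊆ C ∧ Bornology.IsBounded (C \ K)

/-- The support function `h(K, u)`. -/
def suppFn (K : Set (EuclideanSpace ℝ (Fin d))) (u : EuclideanSpace ℝ (Fin d)) : ℝ :=
  sSup ((fun y => ⟪u, y⟫) '' K)

/-- `A_ε` within `Ω`. -/
def thick (Ω A : Set (EuclideanSpace ℝ (Fin d))) (ε : ℝ) : Set (EuclideanSpace ℝ (Fin d)) :=
  {y ∈ Ω | ∃ x ∈ A, dist x y < ε}

/-- The Lévy–Prokhorov distance of two measures (set functions) on `Ω`. -/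
def lpDist (Ω : Set (EuclideanSpace ℝ (Fin d)))
    (μ ν : Set (EuclideanSpace ℝ (Fin d)) → ℝ≥0∞) : ℝ :=
  sInf {ε : ℝ | 0 < ε ∧ ∀ A ⊆ Ω, MeasurableSet A →
    μ A ≤ ν (thick Ω A ε) + ENNReal.ofReal ε ∧ ν A ≤ μ (thick Ω A ε) + ENNReal.ofReal ε}

/-- The boundary of `Ω_C` relative to the sphere. -/
def bdOmega (C : Set (EuclideanSpace ℝ (Fin d))) : Set (EuclideanSpace ℝ (Fin d)) :=
  closure (omegaC C) \ omegaC C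

/-- `Δ(ω)`: smallest angle between a vector of `ω` and a vector of `bd Ω_C`. -/
def sphDelta (C ω : Set (EuclideanSpace ℝ (Fin d))) : ℝ :=
  sInf {θ | ∃ u ∈ ω, ∃ v ∈ bdOmega C, θ = InnerProductGeometry.angle u v}

/-- The bounded-Lipschitz norm `‖f‖_BL = ‖f‖_L + ‖f‖_∞` of `f` on `ω`. -/
def normBL (ω : Set (EuclideanSpace ℝ (Fin d))) (f : EuclideanSpace ℝ (Fin d) → ℝ) : ℝ :=
  sSup {t | ∃ u ∈ ω, ∃ v ∈ ω, u ≠ v ∧ t = |f u - f v| / dist u v} +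
    sSup {t | ∃ u ∈ ω, t = |f u|}

/-
Let `u ∈ ω` be an outer normal of `K` at `x ≠ 0`, and let `θ` be the angle between `u` and `x`;
since `x ∈ C` and `u ∈ int C°`, `θ > π/2`. Walking from `u` along the great circle towards `x`,
after arc length `θ - π/2` one reaches a vector orthogonal to `x`, which is not in `int C°`; so the
arc meets `bd Ω_C` within angle `θ - π/2` of `u`, whence `sin Δ(ω) ≤ sin (θ - π/2) = -cos θ`, i.e.
`sin Δ(ω) ‖x‖ ≤ -⟨u, x⟩`. As `x` maximises `⟨u, ·⟩` on `K`, `-⟨u, x⟩ ≤ ‖y‖` for every `y ∈ K`,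
hence `-⟨u, x⟩ ≤ r`, and `⟨w, x⟩ ≤ ‖x‖ ≤ r / sin Δ(ω)`. Compactness of `ω` keeps `Δ(ω) > 0`.
-/

open Real InnerProductGeometry

section InnerProductSpace

variable {E : Type*} [NormedAddCommGroup E] [InnerProductSpace ℝ E]

lemma exists_norm_eq_one_inner_eq_zero [FiniteDimensional ℝ E] (hE : 2 ≤ Module.finrank ℝ E)
    {u : E} (hu : u ≠ 0) : ∃ q : E, ‖q‖ = 1 ∧ ⟪u, q⟫ = 0 := by
  have hsum := Submodule.finrank_add_finrank_orthogonal (ℝ ∙ u)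
  rw [finrank_span_singleton hu] at hsum
  have : Nontrivial (ℝ ∙ u)ᗮ := Module.nontrivial_of_finrank_pos (R := ℝ) (by omega)
  obtain ⟨q, hq⟩ := exists_norm_eq (ℝ ∙ u)ᗮ zero_le_one
  exact ⟨q, hq, Submodule.inner_right_of_mem_orthogonal (Submodule.mem_span_singleton_self u) q.2⟩

lemma pi_div_two_le_angle_of_inner_nonpos {x y : E} (h : ⟪x, y⟫ ≤ 0) : π / 2 ≤ angle x y := by
  rw [angle, arccos_eq_pi_div_two_sub_arcsin]
  have hq : ⟪x, y⟫ / (‖x‖ * ‖y‖) ≤ 0 := div_nonpos_of_nonpos_of_nonneg h (by positivity)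
  linarith [arcsin_nonpos.2 hq]

lemma norm_sub_le_angle {u v : E} (hu : ‖u‖ = 1) (hv : ‖v‖ = 1) : ‖u - v‖ ≤ angle u v := by
  have hcos := norm_sub_sq_eq_norm_sq_add_norm_sq_sub_two_mul_norm_mul_norm_mul_cos_angle u v
  rw [hu, hv] at hcos
  refine le_of_pow_le_pow_left₀ two_ne_zero (angle_nonneg u v) ?_
  linarith [one_sub_sq_div_two_le_cos (x := angle u v)]

lemma neg_inner_le_infDist_zero {K : Set E} {u x : E} (hu : ‖u‖ ≤ 1) (hK : K.Nonempty)
    (hx : ∀ y ∈ K, ⟪u, y⟫ ≤ ⟪u, x⟫) : -⟪u, x⟫ ≤ infDist 0 K :=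
  (le_infDist hK).2 fun y hy => calc
    -⟪u, x⟫ ≤ -⟪u, y⟫ := neg_le_neg (hx y hy)
    _ ≤ ‖u‖ * ‖y‖ := (neg_le_abs _).trans (abs_real_inner_le_norm u y)
    _ ≤ dist 0 y := by rw [dist_zero_left]; exact mul_le_of_le_one_left (norm_nonneg y) hu

def greatCircle (u q : E) (t : ℝ) : E := cos t • u + sin t • q

lemma greatCircle_zero (u q : E) : greatCircle u q 0 = u := by simp [greatCircle]

lemma continuous_greatCircle (u q : E) : Continuous (greatCircle u q) := by
  unfold greatCircle
  fun_prop

lemma inner_greatCircle {u q : E} (hu : ‖u‖ = 1) (hq : ‖q‖ = 1) (huq : ⟪u, q⟫ = 0) (s t : ℝ) :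
    ⟪greatCircle u q s, greatCircle u q t⟫ = cos (s - t) := by
  simp only [greatCircle, inner_add_left, inner_add_right, real_inner_smul_left,
    real_inner_smul_right, real_inner_self_eq_norm_sq, hu, hq, huq, real_inner_comm u q, cos_sub]
  ring

lemma norm_greatCircle {u q : E} (hu : ‖u‖ = 1) (hq : ‖q‖ = 1) (huq : ⟪u, q⟫ = 0) (t : ℝ) :
    ‖greatCircle u q t‖ = 1 := by
  rw [norm_eq_sqrt_real_inner, inner_greatCircle hu hq huq, sub_self, cos_zero, sqrt_one]

lemma angle_greatCircle {u q : E} (hu : ‖u‖ = 1) (hq : ‖q‖ = 1) (huq : ⟪u, q⟫ = 0) {t : ℝ}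
    (ht₀ : 0 ≤ t) (htπ : t ≤ π) : angle u (greatCircle u q t) = t := by
  have hinner : ⟪u, greatCircle u q t⟫ = cos t := by
    simpa [greatCircle_zero] using inner_greatCircle hu hq huq 0 t
  rw [angle, hinner, hu, norm_greatCircle hu hq huq, mul_one, div_one, arccos_cos ht₀ htπ]

lemma exists_eq_norm_smul_greatCircle_angle [FiniteDimensional ℝ E]
    (hE : 2 ≤ Module.finrank ℝ E) {u : E} (hu : ‖u‖ = 1) (x : E) :
    ∃ q : E, ‖q‖ = 1 ∧ ⟪u, q⟫ = 0 ∧ x = ‖x‖ • greatCircle u q (angle u x) := by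
  set y := x - ⟪u, x⟫ • u with hy
  have huy : ⟪u, y⟫ = 0 := by
    rw [hy, inner_sub_right, real_inner_smul_right, real_inner_self_eq_norm_sq, hu]
    ring
  obtain ⟨q, hq, huq, hyq⟩ : ∃ q : E, ‖q‖ = 1 ∧ ⟪u, q⟫ = 0 ∧ ‖y‖ • q = y := by
    rcases eq_or_ne y 0 with hy0 | hy0
    · have hu0 : u ≠ 0 := norm_ne_zero_iff.1 (by rw [hu]; exact one_ne_zero)
      obtain ⟨q, hq, huq⟩ := exists_norm_eq_one_inner_eq_zero hE hu0
      exact ⟨q, hq, huq, by simp [hy0]⟩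
    · refine ⟨‖y‖⁻¹ • y, norm_smul_inv_norm hy0, by rw [real_inner_smul_right, huy, mul_zero], ?_⟩
      rw [smul_inv_smul₀ (norm_ne_zero_iff.2 hy0)]
  have hcos : ‖x‖ * cos (angle u x) = ⟪u, x⟫ := by
    rw [← cos_angle_mul_norm_mul_norm u x, hu]
    ring
  have hpyth : ‖x‖ ^ 2 = ⟪u, x⟫ ^ 2 + ‖y‖ ^ 2 := by
    have h := norm_add_sq_eq_norm_sq_add_norm_sq_real (x := ⟪u, x⟫ • u) (y := y)
      (by rw [real_inner_smul_left, huy, mul_zero])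
    rw [show ⟪u, x⟫ • u + y = x by rw [hy, add_sub_cancel], norm_smul, hu, mul_one, norm_eq_abs,
      abs_mul_abs_self] at h
    rw [sq, sq, sq]
    exact h
  have hsin : ‖x‖ * sin (angle u x) = ‖y‖ := by
    refine (sq_eq_sq₀ (mul_nonneg (norm_nonneg x) (sin_angle_nonneg u x)) (norm_nonneg y)).1 ?_
    rw [mul_pow, sin_sq, mul_sub, ← mul_pow, hcos]
    linarith
  refine ⟨q, hq, huq, ?_⟩
  rw [greatCircle, smul_add, smul_smul, smul_smul, hcos, hsin, hyq, hy, add_sub_cancel]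

end InnerProductSpace

section PolarCone

variable {C ω : Set (EuclideanSpace ℝ (Fin d))}

lemma inner_neg_of_mem_interior_polarCone {v x : EuclideanSpace ℝ (Fin d)}
    (hv : v ∈ interior (polarCone C)) (hx : x ∈ C) (hx0 : x ≠ 0) : ⟪v, x⟫ < 0 := by
  obtain ⟨ε, hε, hball⟩ := Metric.isOpen_iff.1 isOpen_interior v hv
  have hxn : 0 < ‖x‖ := norm_pos_iff.2 hx0
  have hnear : v + (ε / 2 / ‖x‖) • x ∈ ball v ε := by
    rw [mem_ball_iff_norm, add_sub_cancel_left, norm_smul, norm_eq_abs, abs_of_pos (by positivity),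
      div_mul_cancel₀ _ hxn.ne']
    linarith
  have h := interior_subset (hball hnear) x hx
  rw [inner_add_left, real_inner_smul_left, real_inner_self_eq_norm_sq] at h
  have : 0 < ε / 2 / ‖x‖ * ‖x‖ ^ 2 := by positivity
  linarith

lemma bdOmega_subset (C : Set (EuclideanSpace ℝ (Fin d))) :
    bdOmega C ⊆ sphere 0 1 \ interior (polarCone C) := by
  rintro v ⟨hcl, hnot⟩
  have hv : v ∈ sphere (0 : EuclideanSpace ℝ (Fin d)) 1 :=
    closure_minimal (fun _ h => h.1) isClosed_sphere hcl
  exact ⟨hv, fun hint => hnot ⟨hv, hint⟩⟩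

lemma exists_mem_bdOmega_angle_le (hd : 2 ≤ d) {u x : EuclideanSpace ℝ (Fin d)}
    (hu : u ∈ omegaC C) (hx : x ∈ C) (hx0 : x ≠ 0) :
    ∃ v ∈ bdOmega C, angle u v ≤ angle u x - π / 2 := by
  obtain ⟨hu1, huC⟩ := hu
  rw [mem_sphere_zero_iff_norm] at hu1
  obtain ⟨q, hq, huq, hxq⟩ :=
    exists_eq_norm_smul_greatCircle_angle (by simpa using hd) hu1 x
  set γ := greatCircle u q
  set T := angle u x - π / 2 with hT
  have hT₀ : 0 ≤ T := sub_nonneg.2 <|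
    pi_div_two_le_angle_of_inner_nonpos (inner_neg_of_mem_interior_polarCone huC hx hx0).le
  have hTπ : T ≤ π := by linarith [angle_le_pi u x, pi_pos, hT]
  have hγT : γ T ∉ interior (polarCone C) := fun h => by
    have := inner_neg_of_mem_interior_polarCone h hx hx0
    rw [hxq, real_inner_smul_right, inner_greatCircle hu1 hq huq, show T - angle u x = -(π / 2) by
      ring, cos_neg, cos_pi_div_two, mul_zero] at this
    exact lt_irrefl 0 this
  obtain ⟨t, ⟨htcl, ht₀, htT⟩, ht⟩ : ∃ t ∈ closure (γ ⁻¹' interior (polarCone C)) ∩ Icc 0 T,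
      γ t ∉ interior (polarCone C) := by
    by_contra! h
    refine hγT (isPreconnected_Icc.subset_of_closure_inter_subset
      (isOpen_interior.preimage (continuous_greatCircle u q)) ⟨0, ⟨le_rfl, hT₀⟩, ?_⟩ h
      ⟨hT₀, le_rfl⟩)
    simpa [γ, greatCircle_zero] using huC
  refine ⟨γ t, ⟨map_mem_closure (continuous_greatCircle u q) htcl fun s hs =>
    ⟨mem_sphere_zero_iff_norm.2 (norm_greatCircle hu1 hq huq s), hs⟩, fun h => ht h.2⟩, ?_⟩
  rwa [angle_greatCircle hu1 hq huq ht₀ (htT.trans hTπ)]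

lemma sphDelta_nonneg (C ω : Set (EuclideanSpace ℝ (Fin d))) : 0 ≤ sphDelta C ω :=
  Real.sInf_nonneg (by rintro _ ⟨u, -, v, -, rfl⟩; exact angle_nonneg u v)

lemma sphDelta_le_angle {u v : EuclideanSpace ℝ (Fin d)} (hu : u ∈ ω) (hv : v ∈ bdOmega C) :
    sphDelta C ω ≤ angle u v :=
  csInf_le ⟨0, by rintro _ ⟨u, -, v, -, rfl⟩; exact angle_nonneg u v⟩ ⟨u, hu, v, hv, rfl⟩

lemma sphDelta_pos (hωne : ω.Nonempty) (hωcpt : IsCompact ω) (hω : ω ⊆ omegaC C)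
    (hbd : (bdOmega C).Nonempty) : 0 < sphDelta C ω := by
  obtain ⟨δ, hδ, hthick⟩ :=
    hωcpt.exists_thickening_subset_open isOpen_interior (hω.trans inter_subset_right)
  refine hδ.trans_le (le_csInf ?_ ?_)
  · obtain ⟨u, hu⟩ := hωne
    obtain ⟨v, hv⟩ := hbd
    exact ⟨_, u, hu, v, hv, rfl⟩
  · rintro _ ⟨u, hu, v, hv, rfl⟩
    obtain ⟨hv1, hvC⟩ := bdOmega_subset C hv
    have hδuv : δ ≤ dist v u :=
      not_lt.1 fun h => hvC (hthick (mem_thickening_iff.2 ⟨u, hu, h⟩))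
    calc δ ≤ ‖u - v‖ := by rwa [← dist_eq_norm, dist_comm]
      _ ≤ angle u v :=
        norm_sub_le_angle (mem_sphere_zero_iff_norm.1 (hω hu).1) (mem_sphere_zero_iff_norm.1 hv1)

lemma sin_sphDelta_pos (hd : 2 ≤ d) (hωne : ω.Nonempty) (hωcpt : IsCompact ω)
    (hω : ω ⊆ omegaC C) {x : EuclideanSpace ℝ (Fin d)} (hx : x ∈ C) (hx0 : x ≠ 0) :
    0 < sin (sphDelta C ω) := by
  obtain ⟨u, hu⟩ := hωne
  obtain ⟨v, hv, hle⟩ := exists_mem_bdOmega_angle_le hd (hω hu) hx hx0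
  refine sin_pos_of_pos_of_lt_pi (sphDelta_pos ⟨u, hu⟩ hωcpt hω ⟨v, hv⟩) ?_
  linarith [sphDelta_le_angle hu hv, angle_le_pi u x, pi_pos]

lemma sin_sphDelta_mul_norm_le (hd : 2 ≤ d) (hω : ω ⊆ omegaC C) {u x : EuclideanSpace ℝ (Fin d)}
    (hu : u ∈ ω) (hx : x ∈ C) : sin (sphDelta C ω) * ‖x‖ ≤ -⟪u, x⟫ := by
  rcases eq_or_ne x 0 with rfl | hx0
  · simp
  obtain ⟨v, hv, hle⟩ := exists_mem_bdOmega_angle_le hd (hω hu) hx hx0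
  have hsin : sin (sphDelta C ω) ≤ -cos (angle u x) := by
    rw [← sin_sub_pi_div_two]
    exact sin_le_sin_of_le_of_le_pi_div_two (by linarith [sphDelta_nonneg C ω, pi_pos])
      (by linarith [angle_le_pi u x]) ((sphDelta_le_angle hu hv).trans hle)
  have hinner : ⟪u, x⟫ = cos (angle u x) * ‖x‖ := by
    rw [← cos_angle_mul_norm_mul_norm u x, mem_sphere_zero_iff_norm.1 (hω hu).1, one_mul]
  rw [hinner, neg_mul_eq_neg_mul]
  exact mul_le_mul_of_nonneg_right hsin (norm_nonneg x)

end PolarCone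

theorem revSphImage_height_bound_general (d : ℕ) (hd : 2 ≤ d)
    (C : Set (EuclideanSpace ℝ (Fin d)))
    (K : Set (EuclideanSpace ℝ (Fin d))) (hK : CAsymptotic C K)
    (w : EuclideanSpace ℝ (Fin d)) (hw : ‖w‖ = 1)
    (ω : Set (EuclideanSpace ℝ (Fin d))) (hωne : ω.Nonempty) (hωcpt : IsCompact ω)
    (hωsub : ω ⊆ omegaC C) :
    ∀ x ∈ revSphImage K ω, ⟪w, x⟫ ≤ Metric.infDist 0 K / Real.sin (sphDelta C ω) := by
  rintro x ⟨hxfr, u, hu, hmax⟩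
  obtain ⟨-, hKcl, -, hKC, -⟩ := hK
  have hxK : x ∈ K := hKcl.frontier_subset hxfr
  rcases eq_or_ne x 0 with rfl | hx0
  · simp [infDist_zero_of_mem hxK]
  have hsin := sin_sphDelta_pos hd hωne hωcpt hωsub (hKC hxK) hx0
  rw [le_div_iff₀ hsin, mul_comm]
  calc sin (sphDelta C ω) * ⟪w, x⟫ ≤ sin (sphDelta C ω) * ‖x‖ := by
        gcongr
        simpa [hw] using real_inner_le_norm w x
    _ ≤ -⟪u, x⟫ := sin_sphDelta_mul_norm_le hd hωsub hu (hKC hxK)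
    _ ≤ infDist 0 K :=
        neg_inner_le_infDist_zero (mem_sphere_zero_iff_norm.1 (hωsub hu).1).le ⟨x, hxK⟩ hmax

/-- **From the proof of Theorem 4.1.** For a `C`-asymptotic `K ⊊ C` with `r = dist(o,K)`,
a unit vector `w` with `-w ∈ int C°`, and a nonempty compact `ω ⊆ Ω_C`,
every `x ∈ τ(K,ω)` satisfies `⟨w,x⟩ ≤ r / sin Δ(ω)`. -/
theorem revSphImage_height_bound (d : ℕ) (hd : 2 ≤ d)
    (C : Set (EuclideanSpace ℝ (Fin d))) (hC : IsPCCCone C)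
    (K : Set (EuclideanSpace ℝ (Fin d))) (hK : CAsymptotic C K) (hKC : K ≠ C)
    (w : EuclideanSpace ℝ (Fin d)) (hw : ‖w‖ = 1) (hw' : -w ∈ interior (polarCone C))
    (ω : Set (EuclideanSpace ℝ (Fin d))) (hωne : ω.Nonempty) (hωcpt : IsCompact ω)
    (hωsub : ω ⊆ omegaC C) :
    ∀ x ∈ revSphImage K ω, ⟪w, x⟫ ≤ Metric.infDist 0 K / Real.sin (sphDelta C ω) :=
  revSphImage_height_bound_general d hd C K hK w hw ω hωne hωcpt hωsub
end
end

section
/- Let ω be a nonempty compact subset of Ω_C, let b > 0, and let K be a C-full set whose surface area measure is concentrated on ω with S_{d-1}(K,Ω_C) ≤ b. Then there is a constant c, depending only on C, ω and b, such that ‖x‖ ≤ c for every x ∈ bd K ∩ int C; in particular, every point x ∈ K at which h(K,u) = ⟨x,u⟩ for some u ∈ ω satisfies ‖x‖ ≤ c. -/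
open scoped RealInnerProductSpace ENNReal NNReal
open MeasureTheory Metric Set

noncomputable section

variable {d : ℕ}

/-!
A support point `x` of `K` with outer normal `u ∈ ω` gives `K ⊆ {⟪u, ·⟫ ≤ -δ ‖x‖}`, where
`δ > 0` bounds `-⟪u, w⟫ / ‖w‖` from below on `C \ {0}`, uniformly in `u` by compactness of `ω`.
A flat disk of radius proportional to `‖x‖` then fits into `int C \ K` inside the hyperplane
`⟪u, ·⟫ = -δ ‖x‖ / 2`. Pushing the disk along an interior direction `e` of `C` until it meets
`∂K`, and projecting back along `e` (a Lipschitz map), gives `H^{d-1}(∂K ∩ int C) ≳ ‖x‖^{d-1}`.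
Every point of `∂K ∩ int C` has an outer normal in `Ω_C`, so this measure is at most `b`, which
bounds `‖x‖`.

An arbitrary `x ∈ ∂K ∩ int C` is a limit of such support points: every neighbourhood of `x` meets
`∂K` in positive `H^{d-1}`-measure, while the boundary points whose normals lie outside `ω` form
a null set.
-/

theorem IsPreconnected.inter_frontier_nonempty {X : Type*} [TopologicalSpace X] {s t : Set X}
    (hs : IsPreconnected s) (hst : (s ∩ t).Nonempty) (hst' : (s \ t).Nonempty) :
    (s ∩ frontier t).Nonempty := by
  by_contra h
  have hcover : s ⊆ interior t ∪ (closure t)ᶜ := fun x hx => by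
    by_contra hx'
    simp only [mem_union, mem_compl_iff, not_or, not_not] at hx'
    exact h ⟨x, hx, hx'.2, hx'.1⟩
  obtain ⟨x, hxs, hxt⟩ := hst
  obtain ⟨y, hys, hyt⟩ := hst'
  obtain ⟨z, -, hzi, hzc⟩ := hs _ _ isOpen_interior isClosed_closure.isOpen_compl hcover
    ⟨x, hxs, (hcover hxs).resolve_right (not_not.2 (subset_closure hxt))⟩
    ⟨y, hys, (hcover hys).resolve_left fun hy => hyt (interior_subset hy)⟩
  exact hzc (subset_closure (interior_subset hzi))

section NormedSpace

variable {E : Type*} [NormedAddCommGroup E] [NormedSpace ℝ E]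

theorem exists_add_smul_mem_frontier {K : Set E} {z v : E} (hz : z ∉ K) (hzv : z + v ∈ K) :
    ∃ θ ∈ Icc (0 : ℝ) 1, z + θ • v ∈ frontier K := by
  have hseg : segment ℝ z (z + v) = (fun θ : ℝ => z + θ • v) '' Icc 0 1 := by
    rw [segment_eq_image']; simp
  obtain ⟨p, hp, hpK⟩ := (convex_segment z (z + v)).isPreconnected.inter_frontier_nonempty
    ⟨_, right_mem_segment ℝ z (z + v), hzv⟩ ⟨_, left_mem_segment ℝ z (z + v), hz⟩
  rw [hseg] at hp
  obtain ⟨θ, hθ, rfl⟩ := hp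
  exact ⟨θ, hθ, hpK⟩

/-- `a + (ρ / r) • (y₀ - x)` is a convex combination of `x` and a point of the ball. -/
theorem Convex.exists_add_smul_mem_frontier_of_closedBall_subset {K : Set E} (hK : Convex ℝ K)
    {y₀ x a : E} {r ρ : ℝ} (hball : closedBall y₀ r ⊆ K) (hx : x ∈ K) (ha : a ∉ K)
    (hρ : 0 < ρ) (hρr : ρ ≤ r) (hax : ‖a - x‖ ≤ ρ) :
    ∃ σ ∈ Icc 0 (ρ / r), a + σ • (y₀ - x) ∈ frontier K := by
  have hr : 0 < r := hρ.trans_le hρr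
  set θ := ρ / r
  have hθ : 0 < θ := by positivity
  have hθ1 : θ ≤ 1 := (div_le_one hr).2 hρr
  have hb : y₀ + θ⁻¹ • (a - x) ∈ K := hball <| by
    rw [mem_closedBall, dist_eq_norm, add_sub_cancel_left, norm_smul, norm_inv,
      Real.norm_of_nonneg hθ.le, inv_div, div_mul_eq_mul_div, div_le_iff₀ hρ]
    exact mul_le_mul_of_nonneg_left hax hr.le
  have hw : a + θ • (y₀ - x) ∈ K := by
    have := hK hx hb (sub_nonneg.2 hθ1) hθ.le (by ring)
    rwa [smul_add, smul_smul, mul_inv_cancel₀ hθ.ne', one_smul,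
      show (1 - θ) • x + (θ • y₀ + (a - x)) = a + θ • (y₀ - x) by module] at this
  obtain ⟨τ, hτ, hτK⟩ := exists_add_smul_mem_frontier ha hw
  refine ⟨τ * θ, ⟨mul_nonneg hτ.1 hθ.le, mul_le_of_le_one_left hθ.le hτ.2⟩, ?_⟩
  rwa [mul_smul]

end NormedSpace

section InnerProductSpace

variable {E : Type*} [NormedAddCommGroup E] [InnerProductSpace ℝ E]

theorem inner_neg_of_mem_interior {S : Set E} {n p : E} (hS : ∀ y ∈ S, ⟪n, y⟫ ≤ 0)
    (hp : p ∈ interior S) (hn : n ≠ 0) : ⟪n, p⟫ < 0 := by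
  obtain ⟨ε, hε, hball⟩ := Metric.isOpen_iff.1 isOpen_interior p hp
  have hmem : p + (ε / 2 / ‖n‖) • n ∈ S := interior_subset <| hball <| by
    rw [mem_ball, dist_eq_norm, add_sub_cancel_left, norm_smul, Real.norm_of_nonneg (by positivity),
      div_mul_cancel₀ _ (norm_ne_zero_iff.2 hn)]
    linarith
  have h := hS _ hmem
  rw [inner_add_right, real_inner_smul_right, real_inner_self_eq_norm_sq] at h
  have : 0 < ε / 2 / ‖n‖ * ‖n‖ ^ 2 := by have := norm_pos_iff.2 hn; positivity
  linarith

def obliqueProj (u e : E) (α : ℝ) (y : E) : E :=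
  y + ((α - ⟪u, y⟫) / ⟪u, e⟫) • e

theorem obliqueProj_add_smul {u e : E} (hue : ⟪u, e⟫ ≠ 0) (α : ℝ) (y : E) (s : ℝ) :
    obliqueProj u e α (y + s • e) = obliqueProj u e α y := by
  simp only [obliqueProj, inner_add_right, real_inner_smul_right]
  rw [add_assoc, ← add_smul]
  congr 2
  field_simp
  ring

theorem obliqueProj_of_inner_eq {u e : E} {α : ℝ} {y : E} (hy : ⟪u, y⟫ = α) :
    obliqueProj u e α y = y := by
  simp [obliqueProj, hy]

theorem lipschitzWith_obliqueProj (u e : E) (α : ℝ) :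
    LipschitzWith (1 + ‖u‖ * ‖e‖ / |⟪u, e⟫|).toNNReal (obliqueProj u e α) := by
  refine LipschitzWith.of_dist_le_mul fun y y' => ?_
  rw [Real.coe_toNNReal _ (by positivity), dist_eq_norm, dist_eq_norm]
  have hdiff : obliqueProj u e α y - obliqueProj u e α y' =
      (y - y') - (⟪u, y - y'⟫ / ⟪u, e⟫) • e := by
    simp only [obliqueProj, inner_sub_right]
    rw [sub_div, sub_div, sub_div]
    module
  rw [hdiff]
  calc ‖(y - y') - (⟪u, y - y'⟫ / ⟪u, e⟫) • e‖
      ≤ ‖y - y'‖ + |⟪u, y - y'⟫| / |⟪u, e⟫| * ‖e‖ := by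
        refine (norm_sub_le _ _).trans ?_
        rw [norm_smul, Real.norm_eq_abs, abs_div]
    _ ≤ ‖y - y'‖ + ‖u‖ * ‖y - y'‖ / |⟪u, e⟫| * ‖e‖ := by
        gcongr
        exact abs_real_inner_le_norm u _
    _ = (1 + ‖u‖ * ‖e‖ / |⟪u, e⟫|) * ‖y - y'‖ := by ring

variable [MeasurableSpace E] [BorelSpace E]

/-- The oblique projection along `e` maps `S` onto a superset of `A`. -/
theorem hausdorffMeasure_le_of_forall_add_smul_mem {u e : E} (hue : ⟪u, e⟫ ≠ 0) {α : ℝ}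
    {A S : Set E} (hA : ∀ z ∈ A, ⟪u, z⟫ = α) (hAS : ∀ z ∈ A, ∃ s : ℝ, z + s • e ∈ S) (m : ℕ) :
    μH[m] A ≤ ENNReal.ofReal (1 + ‖u‖ * ‖e‖ / |⟪u, e⟫|) ^ m * μH[m] S := by
  have hsub : A ⊆ obliqueProj u e α '' S := fun z hz => by
    obtain ⟨s, hs⟩ := hAS z hz
    exact ⟨_, hs, by rw [obliqueProj_add_smul hue, obliqueProj_of_inner_eq (hA z hz)]⟩
  calc μH[m] A ≤ μH[m] (obliqueProj u e α '' S) := measure_mono hsub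
    _ ≤ _ := by
      have := (lipschitzWith_obliqueProj u e α).hausdorffMeasure_image_le (Nat.cast_nonneg m) S
      rwa [ENNReal.rpow_natCast] at this

end InnerProductSpace

section FlatDisk

open scoped Pointwise

variable {E : Type*} [NormedAddCommGroup E] [InnerProductSpace ℝ E]

def flatDisk (n c : E) (ρ : ℝ) : Set E :=
  {y | ⟪n, y - c⟫ = 0 ∧ ‖y - c‖ ≤ ρ}

theorem inner_eq_of_mem_flatDisk {n c a : E} {ρ : ℝ} (ha : a ∈ flatDisk n c ρ) :
    ⟪n, a⟫ = ⟪n, c⟫ := by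
  have := ha.1
  rw [inner_sub_right] at this
  linarith

def unitBallMeasure (m : ℕ) : ℝ≥0∞ :=
  μH[m] (closedBall (0 : EuclideanSpace ℝ (Fin m)) 1)

theorem unitBallMeasure_pos (m : ℕ) : 0 < unitBallMeasure m :=
  measure_closedBall_pos _ _ one_pos

theorem unitBallMeasure_lt_top (m : ℕ) : unitBallMeasure m < ⊤ :=
  measure_closedBall_lt_top

variable [MeasurableSpace E] [BorelSpace E]

theorem le_hausdorffMeasure_flatDisk {m : ℕ} (hE : Module.finrank ℝ E = m + 1) {n : E}
    (hn : n ≠ 0) (c : E) {ρ : ℝ} (hρ : 0 < ρ) :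
    ENNReal.ofReal ρ ^ m * unitBallMeasure m ≤ μH[m] (flatDisk n c ρ) := by
  have : Fact (Module.finrank ℝ E = m + 1) := ⟨hE⟩
  have : FiniteDimensional ℝ E := .of_fact_finrank_eq_succ m
  set V := (ℝ ∙ n)ᗮ
  have hV : Module.finrank ℝ V = m := Submodule.finrank_orthogonal_span_singleton hn
  let L : EuclideanSpace ℝ (Fin m) ≃ₗᵢ[ℝ] V :=
    ((stdOrthonormalBasis ℝ V).reindex (finCongr hV)).repr.symm
  let φ : EuclideanSpace ℝ (Fin m) → E := fun y => (L y : E)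
  have hφ : Isometry φ := V.subtypeₗᵢ.isometry.comp L.isometry
  have himg : IsometryEquiv.addLeft c '' (ρ • (φ '' closedBall 0 1)) ⊆ flatDisk n c ρ := by
    rintro _ ⟨_, ⟨_, ⟨y, hy, rfl⟩, rfl⟩, rfl⟩
    have hyV : ⟪n, φ y⟫ = 0 :=
      Submodule.inner_right_of_mem_orthogonal (Submodule.mem_span_singleton_self n) (L y).2
    have hφy : ‖φ y‖ = ‖y‖ := by rw [← L.norm_map]; rfl
    refine ⟨?_, ?_⟩
    · simp [real_inner_smul_right, hyV]
    · simp only [IsometryEquiv.addLeft_apply, add_sub_cancel_left, norm_smul,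
        Real.norm_of_nonneg hρ.le, hφy]
      exact mul_le_of_le_one_right hρ.le (mem_closedBall_zero_iff.1 hy)
  calc ENNReal.ofReal ρ ^ m * unitBallMeasure m
      = μH[m] (IsometryEquiv.addLeft c '' (ρ • (φ '' closedBall 0 1))) := by
        rw [IsometryEquiv.hausdorffMeasure_image, Measure.hausdorffMeasure_smul₀ (Nat.cast_nonneg m)
          hρ.ne', hφ.hausdorffMeasure_image (Or.inl (Nat.cast_nonneg m)), unitBallMeasure,
          ENNReal.smul_def, smul_eq_mul, NNReal.rpow_natCast, ENNReal.coe_pow, ← enorm_eq_nnnorm,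
          Real.enorm_of_nonneg hρ.le]
    _ ≤ μH[m] (flatDisk n c ρ) := measure_mono himg

end FlatDisk

section ConvexBody

variable {E : Type*} [NormedAddCommGroup E] [InnerProductSpace ℝ E]

theorem Convex.exists_norm_eq_one_inner_le_of_notMem_interior [CompleteSpace E] {K : Set E}
    (hK : Convex ℝ K) (hint : (interior K).Nonempty) {p : E} (hp : p ∉ interior K) :
    ∃ n : E, ‖n‖ = 1 ∧ ∀ y ∈ K, ⟪n, y⟫ ≤ ⟪n, p⟫ := by
  obtain ⟨f, hf⟩ := geometric_hahn_banach_open_point hK.interior isOpen_interior hp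
  set v := (InnerProductSpace.toDual ℝ E).symm f
  have hv : ∀ y, ⟪v, y⟫ = f y := fun y => InnerProductSpace.toDual_symm_apply
  have hle : ∀ y ∈ K, f y ≤ f p := by
    have h := closure_minimal (fun y hy => (hf y hy).le)
      (isClosed_le f.continuous continuous_const)
    rw [hK.closure_interior_eq_closure_of_nonempty_interior hint] at h
    exact fun y hy => h (subset_closure hy)
  obtain ⟨y0, hy0⟩ := hint
  have hv0 : v ≠ 0 := fun h => by
    have := hf y0 hy0
    rw [← hv, ← hv, h, inner_zero_left, inner_zero_left] at this
    exact lt_irrefl _ this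
  refine ⟨‖v‖⁻¹ • v, norm_smul_inv_norm hv0, fun y hy => ?_⟩
  rw [real_inner_smul_left, real_inner_smul_left, hv, hv]
  exact mul_le_mul_of_nonneg_left (hle y hy) (by positivity)

theorem Convex.exists_add_smul_mem_frontier_of_mem_flatDisk {K : Set E} (hK : Convex ℝ K)
    {y₀ x n a : E} {r s : ℝ} (hball : closedBall y₀ r ⊆ K) (hx : x ∈ K) (hn : ‖n‖ = 1)
    (hnK : ∀ y ∈ K, ⟪n, y⟫ ≤ ⟪n, x⟫) (hs : 0 < s) (hsr : 2 * s ≤ r)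
    (ha : a ∈ flatDisk n (x + s • n) s) :
    ∃ σ : ℝ, a + σ • (y₀ - x) ∈ frontier K ∧
      ‖a + σ • (y₀ - x) - x‖ ≤ 2 * s * (1 + ‖y₀ - x‖ / r) := by
  have haK : a ∉ K := fun haK => by
    have := hnK a haK
    rw [inner_eq_of_mem_flatDisk ha, inner_add_right, real_inner_smul_right,
      real_inner_self_eq_norm_sq, hn] at this
    linarith
  have hax : ‖a - x‖ ≤ 2 * s :=
    calc ‖a - x‖ = ‖(a - (x + s • n)) + s • n‖ := by congr 1; abel
      _ ≤ s + s := (norm_add_le _ _).trans (add_le_add ha.2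
          (by rw [norm_smul, hn, Real.norm_of_nonneg hs.le, mul_one]))
      _ = 2 * s := by ring
  obtain ⟨σ, hσ, hσK⟩ :=
    hK.exists_add_smul_mem_frontier_of_closedBall_subset hball hx haK (by positivity) hsr hax
  refine ⟨σ, hσK, ?_⟩
  calc ‖a + σ • (y₀ - x) - x‖ ≤ ‖a - x‖ + σ * ‖y₀ - x‖ := by
        rw [show a + σ • (y₀ - x) - x = (a - x) + σ • (y₀ - x) by abel]
        exact (norm_add_le _ _).trans_eq (by rw [norm_smul, Real.norm_of_nonneg hσ.1])
    _ ≤ 2 * s + 2 * s / r * ‖y₀ - x‖ := by gcongr; exact hσ.2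
    _ = 2 * s * (1 + ‖y₀ - x‖ / r) := by ring

variable [MeasurableSpace E] [BorelSpace E]

/-- With `n` an outer normal at `x`, the disk `flatDisk n (x + s • n) s` is covered by frontier
points near `x` under the oblique projection along `y₀ - x`. -/
theorem Convex.hausdorffMeasure_frontier_inter_ball_pos {m : ℕ}
    (hE : Module.finrank ℝ E = m + 1) {K : Set E} (hKc : IsClosed K) (hK : Convex ℝ K)
    {y₀ : E} {r : ℝ} (hr : 0 < r) (hball : closedBall y₀ r ⊆ K) {x : E} (hx : x ∈ frontier K)
    {ε : ℝ} (hε : 0 < ε) : 0 < μH[m] (frontier K ∩ ball x ε) := by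
  have : FiniteDimensional ℝ E := .of_finrank_eq_succ hE
  have hxK : x ∈ K := hKc.frontier_subset hx
  obtain ⟨n, hn, hnK⟩ := hK.exists_norm_eq_one_inner_le_of_notMem_interior
    ⟨y₀, interior_mono hball (mem_interior_iff_mem_nhds.2 (closedBall_mem_nhds y₀ hr))⟩ hx.2
  have hnv : ⟪n, y₀ - x⟫ ≤ -r := by
    have := hnK (y₀ + r • n) (hball (by simp [norm_smul, hn, abs_of_pos hr]))
    rw [inner_add_right, real_inner_smul_right, real_inner_self_eq_norm_sq, hn] at this
    rw [inner_sub_right]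
    linarith
  set k := 1 + ‖y₀ - x‖ / r
  have hk : 0 < k := by positivity
  set s := min (r / 2) (ε / (4 * k))
  have hs : 0 < s := lt_min (by positivity) (by positivity)
  have hsr : 2 * s ≤ r := by linarith [min_le_left (r / 2) (ε / (4 * k))]
  have hsε : 2 * s * k < ε :=
    calc 2 * s * k ≤ 2 * (ε / (4 * k)) * k := by gcongr; exact min_le_right _ _
      _ = ε / 2 := by field_simp; ring
      _ < ε := by linarith
  have hDS : ∀ a ∈ flatDisk n (x + s • n) s, ∃ σ : ℝ, a + σ • (y₀ - x) ∈ frontier K ∩ ball x ε :=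
    fun a ha => by
      obtain ⟨σ, hσK, hσx⟩ :=
        hK.exists_add_smul_mem_frontier_of_mem_flatDisk hball hxK hn hnK hs hsr ha
      exact ⟨σ, hσK, mem_ball_iff_norm.2 (hσx.trans_lt hsε)⟩
  have hpos : 0 < ENNReal.ofReal s ^ m * unitBallMeasure m :=
    ENNReal.mul_pos (pow_ne_zero _ (ENNReal.ofReal_pos.2 hs).ne') (unitBallMeasure_pos m).ne'
  have hle := (le_hausdorffMeasure_flatDisk hE (norm_ne_zero_iff.1 (hn ▸ one_ne_zero)) _ hs).trans
    (hausdorffMeasure_le_of_forall_add_smul_mem (by linarith)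
      (fun a ha => inner_eq_of_mem_flatDisk ha) hDS m)
  exact pos_iff_ne_zero.2 fun h0 => (hpos.trans_le hle).ne' (by rw [h0, mul_zero])

end ConvexBody

theorem surfMeas_eq_hausdorffMeasure {K ω : Set (EuclideanSpace ℝ (Fin d))} {m : ℕ}
    (hdm : d = m + 1) : surfMeas K ω = μH[m] (revSphImage K ω) := by
  subst hdm
  simp [surfMeas]

theorem inner_neg_of_mem_interior_polarCone_s17 {C : Set (EuclideanSpace ℝ (Fin d))}
    {u w : EuclideanSpace ℝ (Fin d)} (hu : u ∈ interior (polarCone C)) (hw : w ∈ C)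
    (hw0 : w ≠ 0) : ⟪u, w⟫ < 0 := by
  rw [real_inner_comm]
  exact inner_neg_of_mem_interior (fun y hy => by rw [real_inner_comm]; exact hy w hw) hu hw0

namespace IsPCCCone

open scoped Pointwise

variable {C : Set (EuclideanSpace ℝ (Fin d))}

theorem smul_mem (hC : IsPCCCone C) {x : EuclideanSpace ℝ (Fin d)} (hx : x ∈ C) {t : ℝ}
    (ht : 0 ≤ t) : t • x ∈ C :=
  hC.2.2.1 x hx t ht

theorem add_mem (hC : IsPCCCone C) {x y : EuclideanSpace ℝ (Fin d)} (hx : x ∈ C) (hy : y ∈ C) :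
    x + y ∈ C := by
  have hmid : (1 / 2 : ℝ) • x + (1 / 2 : ℝ) • y ∈ C :=
    hC.2.1 hx hy (by norm_num) (by norm_num) (by norm_num)
  have h := hC.smul_mem hmid zero_le_two
  rwa [smul_add, smul_smul, smul_smul, show (2 : ℝ) * (1 / 2) = 1 by norm_num, one_smul,
    one_smul] at h

theorem zero_mem (hC : IsPCCCone C) : (0 : EuclideanSpace ℝ (Fin d)) ∈ C := by
  obtain ⟨x, hx⟩ := hC.2.2.2.2
  simpa using hC.smul_mem (interior_subset hx) le_rfl

theorem add_mem_interior (hC : IsPCCCone C) {x y : EuclideanSpace ℝ (Fin d)} (hx : x ∈ C)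
    (hy : y ∈ interior C) : x + y ∈ interior C :=
  interior_maximal (image_subset_iff.2 fun _ hz => hC.add_mem hx (interior_subset hz))
    (isOpenMap_add_left x _ isOpen_interior) ⟨y, hy, rfl⟩

theorem smul_mem_interior (hC : IsPCCCone C) {x : EuclideanSpace ℝ (Fin d)}
    (hx : x ∈ interior C) {t : ℝ} (ht : 0 < t) : t • x ∈ interior C :=
  interior_maximal (by rintro _ ⟨z, hz, rfl⟩; exact hC.smul_mem (interior_subset hz) ht.le)
    (isOpen_interior.smul₀ ht.ne') (smul_mem_smul_set hx)

theorem closedBall_smul_subset_interior (hC : IsPCCCone C) {e : EuclideanSpace ℝ (Fin d)}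
    {r : ℝ} (hr : 0 ≤ r) (hball : closedBall e r ⊆ interior C) {μ : ℝ} (hμ : 0 < μ) :
    closedBall (μ • e) (μ * r) ⊆ interior C := by
  have h := smul_closedBall μ e hr
  rw [Real.norm_of_nonneg hμ.le] at h
  rw [← h]
  rintro _ ⟨z, hz, rfl⟩
  exact hC.smul_mem_interior (hball hz) hμ

theorem zero_notMem_interior (hd : 0 < d) (hC : IsPCCCone C) :
    (0 : EuclideanSpace ℝ (Fin d)) ∉ interior C := by
  intro h0
  have : Nonempty (Fin d) := ⟨⟨0, hd⟩⟩
  obtain ⟨ε, hε, hball⟩ := Metric.isOpen_iff.1 isOpen_interior 0 h0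
  obtain ⟨w, hw⟩ := exists_ne (0 : EuclideanSpace ℝ (Fin d))
  set v := (ε / 2 / ‖w‖) • w
  have hv0 : v ≠ 0 := smul_ne_zero (by have := norm_pos_iff.2 hw; positivity) hw
  have hv : ∀ v' : EuclideanSpace ℝ (Fin d), ‖v'‖ = ‖v‖ → v' ∈ C := fun v' hv' =>
    interior_subset <| hball <| by
      rw [mem_ball_zero_iff, hv', norm_smul, Real.norm_of_nonneg (by positivity),
        div_mul_cancel₀ _ (norm_ne_zero_iff.2 hw)]
      linarith
  exact hv0 (hC.2.2.2.1 v (hv v rfl) (hv (-v) (norm_neg v)))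

theorem exists_closedBall_subset_interior (hd : 0 < d) (hC : IsPCCCone C) :
    ∃ (e : EuclideanSpace ℝ (Fin d)) (r : ℝ), ‖e‖ = 1 ∧ 0 < r ∧ closedBall e r ⊆ interior C := by
  obtain ⟨e₀, he₀⟩ := hC.2.2.2.2
  have he₀0 : e₀ ≠ 0 := fun h => hC.zero_notMem_interior hd (h ▸ he₀)
  have he : ‖e₀‖⁻¹ • e₀ ∈ interior C :=
    hC.smul_mem_interior he₀ (inv_pos.2 (norm_pos_iff.2 he₀0))
  obtain ⟨ε, hε, hball⟩ := Metric.isOpen_iff.1 isOpen_interior _ he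
  exact ⟨_, ε / 2, norm_smul_inv_norm he₀0, by positivity,
    (closedBall_subset_ball (by linarith)).trans hball⟩

theorem exists_pos_forall_inner_le_neg_mul_norm (hC : IsPCCCone C)
    {ω : Set (EuclideanSpace ℝ (Fin d))} (hω : IsCompact ω)
    (hneg : ∀ u ∈ ω, ∀ w ∈ C, w ≠ 0 → ⟪u, w⟫ < 0) :
    ∃ δ > 0, ∀ u ∈ ω, ∀ w ∈ C, ⟪u, w⟫ ≤ -δ * ‖w‖ := by
  set S := C ∩ sphere 0 1
  have hunit : ∃ δ > 0, ∀ p ∈ ω ×ˢ S, ⟪p.1, p.2⟫ ≤ -δ := by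
    rcases (ω ×ˢ S).eq_empty_or_nonempty with h | h
    · exact ⟨1, one_pos, by simp [h]⟩
    obtain ⟨p, hp, hmax⟩ := (hω.prod ((isCompact_sphere 0 1).inter_left hC.1)).exists_isMaxOn h
      (continuous_fst.inner (𝕜 := ℝ) continuous_snd).continuousOn
    have hp0 : p.2 ≠ 0 := ne_zero_of_mem_unit_sphere ⟨p.2, hp.2.2⟩
    exact ⟨-⟪p.1, p.2⟫, neg_pos.2 (hneg _ hp.1 _ hp.2.1 hp0), fun q hq => by
      linarith [show ⟪q.1, q.2⟫ ≤ ⟪p.1, p.2⟫ from hmax hq]⟩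
  obtain ⟨δ, hδ, hδS⟩ := hunit
  refine ⟨δ, hδ, fun u hu w hw => ?_⟩
  rcases eq_or_ne w 0 with rfl | hw0
  · simp
  have hw' : ‖w‖⁻¹ • w ∈ S :=
    ⟨hC.smul_mem hw (by positivity), mem_sphere_zero_iff_norm.2 (norm_smul_inv_norm hw0)⟩
  have h := hδS (u, _) ⟨hu, hw'⟩
  rw [real_inner_smul_right] at h
  have hwpos := norm_pos_iff.2 hw0
  rw [inv_mul_le_iff₀ hwpos] at h
  linarith

theorem mem_interior_polarCone_of_inner_neg (hC : IsPCCCone C) {n : EuclideanSpace ℝ (Fin d)}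
    (hn : ∀ w ∈ C, w ≠ 0 → ⟪n, w⟫ < 0) : n ∈ interior (polarCone C) := by
  obtain ⟨δ, hδ, hδn⟩ :=
    hC.exists_pos_forall_inner_le_neg_mul_norm isCompact_singleton fun u hu => by
      rw [mem_singleton_iff.1 hu]; exact hn
  refine mem_interior.2 ⟨ball n δ, fun n' hn' w hw => ?_, isOpen_ball, mem_ball_self hδ⟩
  have h1 := hδn n rfl w hw
  have h2 : ⟪n' - n, w⟫ ≤ δ * ‖w‖ := (real_inner_le_norm _ _).trans
    (mul_le_mul_of_nonneg_right (mem_ball_iff_norm.1 hn').le (norm_nonneg w))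
  rw [inner_sub_left] at h2
  linarith

end IsPCCCone

namespace CFull

open Filter

variable {C K : Set (EuclideanSpace ℝ (Fin d))}

theorem exists_forall_mem_of_lt_norm (hK : CFull C K) :
    ∃ R : ℝ, ∀ w ∈ C, R < ‖w‖ → w ∈ K := by
  obtain ⟨R, hR⟩ := hK.2.2.2.2.subset_closedBall 0
  exact ⟨R, fun w hw hRw => by_contra fun hwK =>
    (mem_closedBall_zero_iff.1 (hR ⟨hw, hwK⟩)).not_gt hRw⟩

theorem eventually_add_smul_mem (hC : IsPCCCone C) (hK : CFull C K)
    {z w : EuclideanSpace ℝ (Fin d)} (hz : z ∈ C) (hw : w ∈ C) (hw0 : w ≠ 0) :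
    ∀ᶠ s : ℝ in atTop, z + s • w ∈ K := by
  obtain ⟨R, hR⟩ := hK.exists_forall_mem_of_lt_norm
  have hwpos := norm_pos_iff.2 hw0
  filter_upwards [eventually_gt_atTop ((max R 0 + ‖z‖) / ‖w‖)] with s hs
  have hs0 : 0 ≤ s := le_trans (by positivity) hs.le
  refine hR _ (hC.add_mem hz (hC.smul_mem hw hs0)) ?_
  have := norm_sub_norm_le (s • w) (-z)
  rw [sub_neg_eq_add, add_comm, norm_neg, norm_smul, Real.norm_of_nonneg hs0] at this
  rw [div_lt_iff₀ hwpos] at hs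
  linarith [le_max_left R 0]

theorem eventually_smul_mem (hC : IsPCCCone C) (hK : CFull C K)
    {w : EuclideanSpace ℝ (Fin d)} (hw : w ∈ C) (hw0 : w ≠ 0) : ∀ᶠ s : ℝ in atTop, s • w ∈ K := by
  simpa using hK.eventually_add_smul_mem hC hC.zero_mem hw hw0

theorem exists_add_smul_mem_frontier_inter_interior (hC : IsPCCCone C) (hK : CFull C K)
    {e z : EuclideanSpace ℝ (Fin d)} (he : e ∈ C) (he0 : e ≠ 0) (hz : z ∈ interior C)
    (hzK : z ∉ K) : ∃ s : ℝ, z + s • e ∈ frontier K ∩ interior C := by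
  obtain ⟨T, hTK, hT⟩ :=
    ((hK.eventually_add_smul_mem hC (interior_subset hz) he he0).and (eventually_ge_atTop 0)).exists
  obtain ⟨θ, hθ, hθK⟩ := exists_add_smul_mem_frontier hzK hTK
  refine ⟨θ * T, by rwa [mul_smul], ?_⟩
  rw [add_comm]
  exact hC.add_mem_interior (hC.smul_mem he (mul_nonneg hθ.1 hT)) hz

theorem exists_closedBall_subset (hd : 0 < d) (hC : IsPCCCone C) (hK : CFull C K) :
    ∃ (y₀ : EuclideanSpace ℝ (Fin d)) (r : ℝ), 0 < r ∧ closedBall y₀ r ⊆ K := by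
  obtain ⟨e, r, he, hr, hball⟩ := hC.exists_closedBall_subset_interior hd
  obtain ⟨R, hR⟩ := hK.exists_forall_mem_of_lt_norm
  set M := max R 0 + r + 1
  refine ⟨e + M • e, r, hr, fun w hw => ?_⟩
  have hwC : w ∈ C := by
    have h := hC.add_mem (interior_subset (hball (show w - M • e ∈ closedBall e r by
      rwa [mem_closedBall, dist_eq_norm, sub_sub, add_comm, ← dist_eq_norm]))) (hC.smul_mem
      (interior_subset (hball (mem_closedBall_self hr.le))) (show 0 ≤ M by positivity))
    rwa [sub_add_cancel] at h
  refine hR w hwC ?_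
  have h1 : ‖e + M • e‖ = 1 + M := by
    rw [show e + M • e = (1 + M) • e by module, norm_smul, he, mul_one,
      Real.norm_of_nonneg (by positivity)]
  have h2 := norm_sub_norm_le (e + M • e) w
  rw [h1, norm_sub_rev, ← dist_eq_norm] at h2
  have := mem_closedBall.1 hw
  linarith [le_max_left R 0]

theorem mem_polarCone_of_forall_inner_le (hC : IsPCCCone C) (hK : CFull C K)
    {n : EuclideanSpace ℝ (Fin d)} {a : ℝ} (hn : ∀ y ∈ K, ⟪n, y⟫ ≤ a) : n ∈ polarCone C := by
  intro w hw
  rcases eq_or_ne w 0 with rfl | hw0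
  · simp
  by_contra! hpos
  obtain ⟨s, hsK, hs⟩ := ((hK.eventually_smul_mem hC hw hw0).and
    ((tendsto_id.atTop_mul_const hpos).eventually_gt_atTop a)).exists
  have := hn _ hsK
  rw [real_inner_smul_right] at this
  exact this.not_gt hs

theorem inner_neg_of_forall_inner_le (hC : IsPCCCone C) (hK : CFull C K)
    {n : EuclideanSpace ℝ (Fin d)} {a : ℝ} (hn : ∀ y ∈ K, ⟪n, y⟫ ≤ a) (ha : a < 0) :
    ∀ w ∈ C, w ≠ 0 → ⟪n, w⟫ < 0 := by
  intro w hw hw0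
  obtain ⟨s, hsK, hs⟩ := ((hK.eventually_smul_mem hC hw hw0).and (eventually_gt_atTop 0)).exists
  have := hn _ hsK
  rw [real_inner_smul_right] at this
  exact neg_of_mul_neg_right (this.trans_lt ha) hs.le

theorem exists_normal_mem_omegaC (hd : 0 < d) (hC : IsPCCCone C) (hK : CFull C K)
    {p : EuclideanSpace ℝ (Fin d)} (hp : p ∈ frontier K) (hpC : p ∈ interior C) :
    ∃ n ∈ omegaC C, ∀ y ∈ K, ⟪n, y⟫ ≤ ⟪n, p⟫ := by
  obtain ⟨y₀, r, hr, hball⟩ := hK.exists_closedBall_subset hd hC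
  obtain ⟨n, hn, hnK⟩ := hK.2.2.1.exists_norm_eq_one_inner_le_of_notMem_interior
    ⟨y₀, interior_mono hball (mem_interior_iff_mem_nhds.2 (closedBall_mem_nhds y₀ hr))⟩ hp.2
  have hnp : ⟪n, p⟫ < 0 := inner_neg_of_mem_interior (hK.mem_polarCone_of_forall_inner_le hC hnK)
    hpC (norm_ne_zero_iff.1 (hn ▸ one_ne_zero))
  exact ⟨n, ⟨mem_sphere_zero_iff_norm.2 hn,
    hC.mem_interior_polarCone_of_inner_neg (hK.inner_neg_of_forall_inner_le hC hnK hnp)⟩, hnK⟩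

theorem frontier_inter_interior_subset_revSphImage (hd : 0 < d) (hC : IsPCCCone C)
    (hK : CFull C K) : frontier K ∩ interior C ⊆ revSphImage K (omegaC C) :=
  fun _ hp => ⟨hp.1, hK.exists_normal_mem_omegaC hd hC hp.1 hp.2⟩

theorem le_hausdorffMeasure_frontier_inter_interior {m : ℕ} (hdm : d = m + 1)
    (hC : IsPCCCone C) (hK : CFull C K) {e : EuclideanSpace ℝ (Fin d)} (he : ‖e‖ = 1)
    {r₀ : ℝ} (hr₀ : 0 < r₀) (hball : closedBall e r₀ ⊆ interior C)
    {u : EuclideanSpace ℝ (Fin d)} (hu : ‖u‖ = 1) {δ : ℝ} (hδ : 0 < δ) (hue : ⟪u, e⟫ ≤ -δ)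
    {t : ℝ} (ht : 0 < t) (hKu : ∀ y ∈ K, ⟪u, y⟫ ≤ -t) :
    ENNReal.ofReal (t * r₀ / 2) ^ m * unitBallMeasure m ≤
      ENNReal.ofReal (1 + 1 / δ) ^ m * μH[m] (frontier K ∩ interior C) := by
  set γ := -⟪u, e⟫
  have hγ : 0 < γ := by linarith
  have hγ1 : γ ≤ 1 := by
    have := neg_abs_le ⟪u, e⟫ |>.trans' (neg_le_neg (abs_real_inner_le_norm u e))
    rw [hu, he, mul_one] at this
    linarith
  set μ := t / (2 * γ)
  have hμ : 0 < μ := by positivity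
  have hμt : t / 2 ≤ μ := div_le_div_of_nonneg_left ht.le (by positivity) (by linarith)
  set A := flatDisk u (μ • e) (μ * r₀)
  have hA : ∀ z ∈ A, ⟪u, z⟫ = -t / 2 := fun z hz => by
    have hue0 : ⟪u, e⟫ ≠ 0 := by linarith
    rw [inner_eq_of_mem_flatDisk hz, real_inner_smul_right]
    simp only [μ, γ]
    field_simp
  have hAS : ∀ z ∈ A, ∃ s : ℝ, z + s • e ∈ frontier K ∩ interior C := fun z hz =>
    hK.exists_add_smul_mem_frontier_inter_interior hC
      (interior_subset (hball (mem_closedBall_self hr₀.le))) (norm_ne_zero_iff.1 (he ▸ one_ne_zero))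
      (hC.closedBall_smul_subset_interior hr₀.le hball hμ (mem_closedBall_iff_norm.2 hz.2))
      fun hzK => by linarith [hKu z hzK, hA z hz]
  have hLip : ENNReal.ofReal (1 + ‖u‖ * ‖e‖ / |⟪u, e⟫|) ≤ ENNReal.ofReal (1 + 1 / δ) := by
    rw [hu, he, one_mul, abs_of_neg (by linarith)]
    gcongr
    linarith
  calc ENNReal.ofReal (t * r₀ / 2) ^ m * unitBallMeasure m
      ≤ ENNReal.ofReal (μ * r₀) ^ m * unitBallMeasure m := by
        gcongr
        linarith [mul_le_mul_of_nonneg_right hμt hr₀.le]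
    _ ≤ μH[m] A := le_hausdorffMeasure_flatDisk (by simp [hdm])
        (norm_ne_zero_iff.1 (hu ▸ one_ne_zero)) _ (by positivity)
    _ ≤ ENNReal.ofReal (1 + ‖u‖ * ‖e‖ / |⟪u, e⟫|) ^ m * μH[m] (frontier K ∩ interior C) :=
        hausdorffMeasure_le_of_forall_add_smul_mem (by linarith) hA hAS m
    _ ≤ ENNReal.ofReal (1 + 1 / δ) ^ m * μH[m] (frontier K ∩ interior C) := by gcongr

theorem frontier_inter_interior_subset_closure_revSphImage (hd : 0 < d) (hC : IsPCCCone C)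
    (hK : CFull C K) {ω : Set (EuclideanSpace ℝ (Fin d))}
    (hnull : surfMeas K (omegaC C \ ω) = 0) :
    frontier K ∩ interior C ⊆ closure (revSphImage K ω) := by
  obtain ⟨m, hdm⟩ : ∃ m, d = m + 1 := ⟨d - 1, by omega⟩
  rw [surfMeas_eq_hausdorffMeasure hdm] at hnull
  rintro x ⟨hxK, hxC⟩
  refine Metric.mem_closure_iff.2 fun ε hε => ?_
  obtain ⟨ε₁, hε₁, hball₁⟩ := Metric.isOpen_iff.1 isOpen_interior x hxC
  obtain ⟨y₀, r, hr, hball⟩ := hK.exists_closedBall_subset hd hC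
  set B := frontier K ∩ ball x (min ε ε₁)
  have hpos : 0 < μH[m] B := hK.2.2.1.hausdorffMeasure_frontier_inter_ball_pos (by simp [hdm])
    hK.2.1 hr hball hxK (lt_min hε hε₁)
  have hcover : B ⊆ (revSphImage K ω ∩ ball x ε) ∪ revSphImage K (omegaC C \ ω) := by
    rintro z ⟨hzK, hz⟩
    obtain ⟨n, hn, hnK⟩ := hK.exists_normal_mem_omegaC hd hC hzK
      (hball₁ (ball_subset_ball (min_le_right _ _) hz))
    by_cases hnω : n ∈ ω
    · exact Or.inl ⟨⟨hzK, n, hnω, hnK⟩, ball_subset_ball (min_le_left _ _) hz⟩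
    · exact Or.inr ⟨hzK, n, ⟨hn, hnω⟩, hnK⟩
  obtain ⟨z, hz, hzx⟩ : (revSphImage K ω ∩ ball x ε).Nonempty := by
    by_contra! h
    rw [h, empty_union] at hcover
    exact hpos.ne' (measure_mono_null hcover hnull)
  exact ⟨z, hz, by rw [dist_comm]; exact hzx⟩

end CFull

theorem ENNReal.pow_le_toReal_div_of_ofReal_pow_mul_le {ρ : ℝ} (hρ : 0 ≤ ρ) {m : ℕ}
    {κ N : ℝ≥0∞} (hκ : κ ≠ 0) (hκ' : κ ≠ ⊤) (hN : N ≠ ⊤) (h : ENNReal.ofReal ρ ^ m * κ ≤ N) :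
    ρ ^ m ≤ (N / κ).toReal := by
  rw [← ENNReal.ofReal_le_iff_le_toReal (ENNReal.div_ne_top hN hκ), ENNReal.ofReal_pow hρ]
  exact (ENNReal.le_div_iff_mul_le (Or.inl hκ) (Or.inl hκ')).2 h

theorem le_max_one_of_pow_le {ρ M : ℝ} {m : ℕ} (hm : m ≠ 0) (h : ρ ^ m ≤ M) : ρ ≤ max 1 M := by
  rcases le_or_gt ρ 1 with hρ | hρ
  · exact hρ.trans (le_max_left 1 M)
  · exact (le_self_pow₀ hρ.le hm).trans (h.trans (le_max_right 1 M))

theorem exists_norm_le_of_forall_inner_le (hd : 2 ≤ d) {C ω : Set (EuclideanSpace ℝ (Fin d))}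
    (hC : IsPCCCone C) (hωcpt : IsCompact ω) (hωsub : ω ⊆ omegaC C) (b : ℝ) :
    ∃ c : ℝ, ∀ K, CFull C K → surfMeas K (omegaC C) ≤ ENNReal.ofReal b →
      ∀ x ∈ K, ∀ u ∈ ω, (∀ y ∈ K, ⟪u, y⟫ ≤ ⟪u, x⟫) → ‖x‖ ≤ c := by
  obtain ⟨m, hdm⟩ : ∃ m, d = m + 1 := ⟨d - 1, by omega⟩
  obtain ⟨e, r₀, he, hr₀, hball⟩ := hC.exists_closedBall_subset_interior (by omega)
  obtain ⟨δ, hδ, hδω⟩ := hC.exists_pos_forall_inner_le_neg_mul_norm hωcpt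
    fun u hu w hw hw0 => inner_neg_of_mem_interior_polarCone_s17 (hωsub hu).2 hw hw0
  set N := ENNReal.ofReal (1 + 1 / δ) ^ m * ENNReal.ofReal b
  set M := (N / unitBallMeasure m).toReal
  refine ⟨2 * max 1 M / (δ * r₀), fun K hK hKb x hx u hu hxu => ?_⟩
  rw [surfMeas_eq_hausdorffMeasure hdm] at hKb
  rcases eq_or_ne x 0 with rfl | hx0
  · rw [norm_zero]; positivity
  have ht : 0 < δ * ‖x‖ := mul_pos hδ (norm_pos_iff.2 hx0)
  have hKu : ∀ y ∈ K, ⟪u, y⟫ ≤ -(δ * ‖x‖) := fun y hy => by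
    linarith [hxu y hy, hδω u hu x (hK.2.2.2.1 hx)]
  have hue : ⟪u, e⟫ ≤ -δ := by simpa [he] using hδω u hu e (interior_subset (hball
    (mem_closedBall_self hr₀.le)))
  have harea := (hK.le_hausdorffMeasure_frontier_inter_interior hdm hC he hr₀ hball
    (mem_sphere_zero_iff_norm.1 (hωsub hu).1) hδ hue ht hKu).trans (mul_le_mul_right
    ((measure_mono (hK.frontier_inter_interior_subset_revSphImage (by omega) hC)).trans hKb) _)
  have hpow := ENNReal.pow_le_toReal_div_of_ofReal_pow_mul_le (by positivity)
    (unitBallMeasure_pos m).ne' (unitBallMeasure_lt_top m).ne (by finiteness) harea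
  have := le_max_one_of_pow_le (by omega) hpow
  rw [le_div_iff₀ (by positivity)]
  linarith

theorem boundary_points_bounded_general (d : ℕ) (hd : 2 ≤ d)
    (C : Set (EuclideanSpace ℝ (Fin d))) (hC : IsPCCCone C)
    (ω : Set (EuclideanSpace ℝ (Fin d))) (hωcpt : IsCompact ω)
    (hωsub : ω ⊆ omegaC C) (b : ℝ) :
    ∃ c : ℝ, ∀ K : Set (EuclideanSpace ℝ (Fin d)), CFull C K →
      surfMeas K (omegaC C \ ω) = 0 → surfMeas K (omegaC C) ≤ ENNReal.ofReal b →
      (∀ x ∈ frontier K ∩ interior C, ‖x‖ ≤ c) ∧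
      (∀ x ∈ K, ∀ u ∈ ω, suppFn K u = ⟪u, x⟫ → ‖x‖ ≤ c) := by
  obtain ⟨c, hc⟩ := exists_norm_le_of_forall_inner_le hd hC hωcpt hωsub b
  refine ⟨c, fun K hK hnull hKb => ⟨fun x hx => ?_, fun x hx u hu hxu => ?_⟩⟩
  · have hsub : revSphImage K ω ⊆ closedBall 0 c := fun z ⟨hzK, u, hu, hzu⟩ =>
      mem_closedBall_zero_iff.2 (hc K hK hKb z (hK.2.1.frontier_subset hzK) u hu hzu)
    exact mem_closedBall_zero_iff.1 <| closure_minimal hsub isClosed_closedBall <|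
      hK.frontier_inter_interior_subset_closure_revSphImage (by omega) hC hnull hx
  · refine hc K hK hKb x hx u hu fun y hy => ?_
    have hbdd : BddAbove ((fun y => ⟪u, y⟫) '' K) :=
      ⟨0, forall_mem_image.2 fun z hz => interior_subset (hωsub hu).2 z (hK.2.2.2.1 hz)⟩
    exact hxu ▸ le_csSup hbdd (mem_image_of_mem _ hy)

/-- **From the proof of Theorem 1.2.** For `C`-full sets with surface area measure concentrated
on a compact `ω ⊆ Ω_C` and total measure at most `b`, the boundary points in `int C` (and the
points where the support function is attained for some `u ∈ ω`) lie in a ball of radius `c`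
depending only on `C, ω, b`. -/
theorem boundary_points_bounded (d : ℕ) (hd : 2 ≤ d)
    (C : Set (EuclideanSpace ℝ (Fin d))) (hC : IsPCCCone C)
    (ω : Set (EuclideanSpace ℝ (Fin d))) (hωne : ω.Nonempty) (hωcpt : IsCompact ω)
    (hωsub : ω ⊆ omegaC C) (b : ℝ) (hb : 0 < b) :
    ∃ c : ℝ, ∀ K : Set (EuclideanSpace ℝ (Fin d)), CFull C K →
      surfMeas K (omegaC C \ ω) = 0 → surfMeas K (omegaC C) ≤ ENNReal.ofReal b →
      (∀ x ∈ frontier K ∩ interior C, ‖x‖ ≤ c) ∧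
      (∀ x ∈ K, ∀ u ∈ ω, suppFn K u = ⟪u, x⟫ → ‖x‖ ≤ c) :=
  boundary_points_bounded_general d hd C hC ω hωcpt hωsub b
end
end
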